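/- arXiv:1302.0279 — 3 statements merged into one kernel-verified Lean document; each statement's English description precedes it below -/
import Mathlib

section
/- Let u = (u₁, 0, u₋₁) and v = (v₁, 0, v₋₁) be triples of nonnegative continuously differentiable functions ℝ³ → ℝ whose nonzero components and their gradients are in L²(ℝ³), whose nonzero components are in L⁴(ℝ³), and with ∫ V|u|² < ∞ and ∫ V|v|² < ∞. Define w = (w₁, 0, w₋₁) by w_j(x) = √((u_j(x)² + v_j(x)²)/2) for j = 1, −1. Then each w_j is differentiable on ℝ³ and ℰ_q[w] ≤ (ℰ_q[u] + ℰ_q[v])/2. -/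
open MeasureTheory
open scoped RealInnerProductSpace

noncomputable section

abbrev E3 := EuclideanSpace ℝ (Fin 3)

/-- Pointwise squared norm `|u|² = u₁² + u₀² + u₋₁²` of a triple of functions. -/
def nsq (u1 u0 um1 : E3 → ℝ) (x : E3) : ℝ := u1 x ^ 2 + u0 x ^ 2 + um1 x ^ 2

/-- The energy functional `ℰ_q[u]`. -/
def energy (V : E3 → ℝ) (βn βs q : ℝ) (u1 u0 um1 : E3 → ℝ) : ℝ :=
  ∫ x : E3,
    (‖gradient u1 x‖ ^ 2 + ‖gradient u0 x‖ ^ 2 + ‖gradient um1 x‖ ^ 2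
      + V x * nsq u1 u0 um1 x
      + βn * (nsq u1 u0 um1 x) ^ 2
      + βs * (2 * u0 x ^ 2 * (u1 x - um1 x) ^ 2 + (u1 x ^ 2 - um1 x ^ 2) ^ 2)
      + q * (u1 x ^ 2 + um1 x ^ 2))

/-- The admissible class `𝔸_M`: triples of nonnegative `C¹` functions with the
required integrability and the constraints `𝒩[u] = 1`, `ℳ[u] = M`. -/
structure Admissible (V : E3 → ℝ) (M : ℝ) (u1 u0 um1 : E3 → ℝ) : Prop where
  smooth1 : ContDiff ℝ 1 u1
  smooth0 : ContDiff ℝ 1 u0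
  smoothm1 : ContDiff ℝ 1 um1
  nonneg1 : ∀ x, 0 ≤ u1 x
  nonneg0 : ∀ x, 0 ≤ u0 x
  nonnegm1 : ∀ x, 0 ≤ um1 x
  l2_1 : Integrable (fun x => u1 x ^ 2)
  l2_0 : Integrable (fun x => u0 x ^ 2)
  l2_m1 : Integrable (fun x => um1 x ^ 2)
  grad2_1 : Integrable (fun x => ‖gradient u1 x‖ ^ 2)
  grad2_0 : Integrable (fun x => ‖gradient u0 x‖ ^ 2)
  grad2_m1 : Integrable (fun x => ‖gradient um1 x‖ ^ 2)
  l4_1 : Integrable (fun x => u1 x ^ 4)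
  l4_0 : Integrable (fun x => u0 x ^ 4)
  l4_m1 : Integrable (fun x => um1 x ^ 4)
  pot : Integrable (fun x => V x * nsq u1 u0 um1 x)
  mass : ∫ x : E3, nsq u1 u0 um1 x = 1
  magnetization : ∫ x : E3, (u1 x ^ 2 - um1 x ^ 2) = M

/-- Hypotheses on the trap potential `V`: measurable, nonnegative, locally bounded,
and tending to infinity at infinity. -/
structure TrapPotential (V : E3 → ℝ) : Prop where
  meas : Measurable V
  nonneg : ∀ x, 0 ≤ V x
  bddOnBalls : ∀ r : ℝ, ∃ C : ℝ, ∀ x : E3, ‖x‖ ≤ r → V x ≤ C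
  tendsToInfty : ∀ C : ℝ, 0 < C → ∃ R : ℝ, 0 < R ∧ ∀ x : E3, R ≤ ‖x‖ → C ≤ V x

/-- `u` is a ground state: admissible and minimizes the energy over `𝔸_M`. -/
def IsGroundState (V : E3 → ℝ) (βn βs q M : ℝ) (u1 u0 um1 : E3 → ℝ) : Prop :=
  Admissible V M u1 u0 um1 ∧
    ∀ v1 v0 vm1 : E3 → ℝ, Admissible V M v1 v0 vm1 →
      energy V βn βs q u1 u0 um1 ≤ energy V βn βs q v1 v0 vm1


/-!
Pointwise, `w_j²` is the average of `u_j²` and `v_j²`, so the potential and `q` terms of the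
energy density are affine and the quartic terms convex in the squares. For the gradient: where
`u_j² + v_j² > 0`, the chain rule and Cauchy–Schwarz give `|∇w_j|² ≤ (|∇u_j|² + |∇v_j|²)/2`; where
`u_j = v_j = 0`, both functions are at a minimum, so their gradients vanish and the squeeze
`0 ≤ w_j ≤ u_j + v_j` forces `∇w_j = 0`. Integrating the pointwise inequality gives the claim.
-/

open Topology Asymptotics InnerProductSpace

theorem norm_gradient_eq_norm_fderiv {F : Type*} [NormedAddCommGroup F] [InnerProductSpace ℝ F]
    [CompleteSpace F] (f : F → ℝ) (x : F) : ‖gradient f x‖ = ‖fderiv ℝ f x‖ := by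
  rw [← toDual_gradient, LinearIsometryEquiv.norm_map]

section SqrtHalfSqAddSq

variable {E : Type*} [NormedAddCommGroup E] [NormedSpace ℝ E]
  {u v : E → ℝ} {u' v' : E →L[ℝ] ℝ} {x : E}

theorem norm_smul_add_smul_sq_le {F : Type*} [SeminormedAddCommGroup F] [NormedSpace ℝ F]
    (a b : ℝ) (f g : F) :
    ‖a • f + b • g‖ ^ 2 ≤ (a ^ 2 + b ^ 2) * (‖f‖ ^ 2 + ‖g‖ ^ 2) := by
  have h : ‖a • f + b • g‖ ≤ |a| * ‖f‖ + |b| * ‖g‖ := by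
    simpa only [norm_smul, Real.norm_eq_abs] using norm_add_le (a • f) (b • g)
  calc ‖a • f + b • g‖ ^ 2 ≤ (|a| * ‖f‖ + |b| * ‖g‖) ^ 2 := by gcongr
    _ ≤ (|a| ^ 2 + |b| ^ 2) * (‖f‖ ^ 2 + ‖g‖ ^ 2) := by
      nlinarith [sq_nonneg (|a| * ‖g‖ - |b| * ‖f‖)]
    _ = (a ^ 2 + b ^ 2) * (‖f‖ ^ 2 + ‖g‖ ^ 2) := by rw [sq_abs, sq_abs]

theorem hasFDerivAt_zero_of_nonneg_of_le {f g : E → ℝ} (hf : ∀ᶠ y in 𝓝 x, 0 ≤ f y)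
    (hfg : ∀ᶠ y in 𝓝 x, f y ≤ g y) (hg : HasFDerivAt g (0 : E →L[ℝ] ℝ) x) (hgx : g x = 0) :
    HasFDerivAt f (0 : E →L[ℝ] ℝ) x := by
  have hfx : f x = 0 := le_antisymm (hgx ▸ hfg.self_of_nhds) hf.self_of_nhds
  have hbound : (fun y => f y - f x - (0 : E →L[ℝ] ℝ) (y - x)) =O[𝓝 x]
      fun y => g y - g x - (0 : E →L[ℝ] ℝ) (y - x) := by
    refine IsBigO.of_bound' ?_
    filter_upwards [hf, hfg] with y hy0 hyg
    simp only [hfx, hgx, sub_zero, zero_apply, Real.norm_eq_abs]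
    exact abs_le_abs_of_nonneg hy0 hyg
  exact HasFDerivAt.of_isLittleO (hbound.trans_isLittleO hg.isLittleO)

theorem HasFDerivAt.sqrt_half_sq_add_sq (hu : HasFDerivAt u u' x) (hv : HasFDerivAt v v' x)
    (hx : u x ^ 2 + v x ^ 2 ≠ 0) :
    HasFDerivAt (fun y => √((u y ^ 2 + v y ^ 2) / 2))
      ((1 / (2 * √((u x ^ 2 + v x ^ 2) / 2))) • (u x • u' + v x • v')) x := by
  have hsq : HasFDerivAt (fun y => (u y ^ 2 + v y ^ 2) / 2) (u x • u' + v x • v') x := by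
    simp_rw [div_eq_mul_inv]
    refine (((hu.pow 2).fun_add (hv.pow 2)).mul_const (2⁻¹ : ℝ)).congr_fderiv ?_
    ext y
    simp only [Nat.add_one_sub_one, pow_one, nsmul_eq_mul, Nat.cast_ofNat, smul_add, add_apply,
      smul_apply, smul_eq_mul]
    ring
  exact hsq.sqrt (by positivity)

theorem exists_hasFDerivAt_sqrt_half_sq_add_sq (hu0 : ∀ y, 0 ≤ u y) (hv0 : ∀ y, 0 ≤ v y)
    (hu : HasFDerivAt u u' x) (hv : HasFDerivAt v v' x) :
    ∃ w' : E →L[ℝ] ℝ, HasFDerivAt (fun y => √((u y ^ 2 + v y ^ 2) / 2)) w' x ∧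
      ‖w'‖ ^ 2 ≤ (‖u'‖ ^ 2 + ‖v'‖ ^ 2) / 2 := by
  by_cases hx : u x ^ 2 + v x ^ 2 = 0
  · have hux : u x = 0 := by nlinarith [sq_nonneg (u x), sq_nonneg (v x)]
    have hvx : v x = 0 := by nlinarith [sq_nonneg (u x), sq_nonneg (v x)]
    have hu' : u' = 0 := IsLocalMin.hasFDerivAt_eq_zero (.of_forall fun y => hux ▸ hu0 y) hu
    have hv' : v' = 0 := IsLocalMin.hasFDerivAt_eq_zero (.of_forall fun y => hvx ▸ hv0 y) hv
    refine ⟨0, hasFDerivAt_zero_of_nonneg_of_le (.of_forall fun y => Real.sqrt_nonneg _)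
      (.of_forall fun y => ?_) (by simpa [hu', hv'] using hu.fun_add hv) (by simp [hux, hvx]), ?_⟩
    · show _ ≤ u y + v y
      rw [Real.sqrt_le_left (add_nonneg (hu0 y) (hv0 y))]
      nlinarith [mul_nonneg (hu0 y) (hv0 y)]
    · rw [norm_zero, sq, zero_mul]
      positivity
  · refine ⟨_, hu.sqrt_half_sq_add_sq hv hx, ?_⟩
    have hs : √((u x ^ 2 + v x ^ 2) / 2) ^ 2 = (u x ^ 2 + v x ^ 2) / 2 :=
      Real.sq_sqrt (by positivity)
    calc _ = (1 / (2 * √((u x ^ 2 + v x ^ 2) / 2))) ^ 2 * ‖u x • u' + v x • v'‖ ^ 2 := by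
          rw [norm_smul, mul_pow, Real.norm_eq_abs, sq_abs]
      _ ≤ (1 / (2 * √((u x ^ 2 + v x ^ 2) / 2))) ^ 2 *
          ((u x ^ 2 + v x ^ 2) * (‖u'‖ ^ 2 + ‖v'‖ ^ 2)) := by
          gcongr
          exact norm_smul_add_smul_sq_le _ _ _ _
      _ = (‖u'‖ ^ 2 + ‖v'‖ ^ 2) / 2 := by
          rw [div_pow, mul_pow, hs]
          field_simp

theorem DifferentiableAt.sqrt_half_sq_add_sq (hu0 : ∀ y, 0 ≤ u y) (hv0 : ∀ y, 0 ≤ v y)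
    (hu : DifferentiableAt ℝ u x) (hv : DifferentiableAt ℝ v x) :
    DifferentiableAt ℝ (fun y => √((u y ^ 2 + v y ^ 2) / 2)) x := by
  obtain ⟨w', hw, -⟩ :=
    exists_hasFDerivAt_sqrt_half_sq_add_sq hu0 hv0 hu.hasFDerivAt hv.hasFDerivAt
  exact hw.differentiableAt

theorem norm_gradient_sqrt_half_sq_add_sq_sq_le {F : Type*} [NormedAddCommGroup F]
    [InnerProductSpace ℝ F] [CompleteSpace F] {u v : F → ℝ} {x : F}
    (hu0 : ∀ y, 0 ≤ u y) (hv0 : ∀ y, 0 ≤ v y)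
    (hu : DifferentiableAt ℝ u x) (hv : DifferentiableAt ℝ v x) :
    ‖gradient (fun y => √((u y ^ 2 + v y ^ 2) / 2)) x‖ ^ 2 ≤
      (‖gradient u x‖ ^ 2 + ‖gradient v x‖ ^ 2) / 2 := by
  obtain ⟨w', hw, hw'⟩ :=
    exists_hasFDerivAt_sqrt_half_sq_add_sq hu0 hv0 hu.hasFDerivAt hv.hasFDerivAt
  simpa only [norm_gradient_eq_norm_fderiv, hw.fderiv] using hw'

end SqrtHalfSqAddSq

section Integrability

variable {α : Type*} [MeasurableSpace α] {μ : Measure α} {a b : α → ℝ}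

theorem integrable_sq_add_sq_sq (ha : AEStronglyMeasurable a μ) (hb : AEStronglyMeasurable b μ)
    (ha4 : Integrable (fun x => a x ^ 4) μ) (hb4 : Integrable (fun x => b x ^ 4) μ) :
    Integrable (fun x => (a x ^ 2 + b x ^ 2) ^ 2) μ := by
  refine ((ha4.add hb4).const_mul 2).mono' (((ha.pow 2).add (hb.pow 2)).pow 2)
    (ae_of_all _ fun x => ?_)
  rw [Real.norm_eq_abs, abs_of_nonneg (by positivity), Pi.add_apply]
  nlinarith [sq_nonneg (a x ^ 2 - b x ^ 2)]

theorem integrable_sq_sub_sq_sq (ha : AEStronglyMeasurable a μ) (hb : AEStronglyMeasurable b μ)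
    (ha4 : Integrable (fun x => a x ^ 4) μ) (hb4 : Integrable (fun x => b x ^ 4) μ) :
    Integrable (fun x => (a x ^ 2 - b x ^ 2) ^ 2) μ := by
  refine (((ha4.add hb4).const_mul 2).sub (integrable_sq_add_sq_sq ha hb ha4 hb4)).congr
    (ae_of_all _ fun x => ?_)
  simp only [Pi.add_apply, Pi.sub_apply]
  ring

end Integrability

def twoComponentDensity (V : E3 → ℝ) (βn βs q : ℝ) (a b : E3 → ℝ) (x : E3) : ℝ :=
  ‖gradient a x‖ ^ 2 + ‖gradient b x‖ ^ 2 + V x * (a x ^ 2 + b x ^ 2)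
    + βn * (a x ^ 2 + b x ^ 2) ^ 2 + βs * (a x ^ 2 - b x ^ 2) ^ 2 + q * (a x ^ 2 + b x ^ 2)

theorem energy_eq_integral_twoComponentDensity (V : E3 → ℝ) (βn βs q : ℝ) (a b : E3 → ℝ) :
    energy V βn βs q a (fun _ => 0) b = ∫ x, twoComponentDensity V βn βs q a b x := by
  unfold energy twoComponentDensity nsq
  congr 1
  funext x
  simp

section TwoComponentDensity

variable {V : E3 → ℝ} {βn βs q : ℝ}

theorem twoComponentDensity_nonneg (hV : ∀ x, 0 ≤ V x) (hβn : 0 ≤ βn) (hβs : 0 ≤ βs)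
    (hq : 0 ≤ q) (a b : E3 → ℝ) (x : E3) : 0 ≤ twoComponentDensity V βn βs q a b x := by
  have := hV x
  unfold twoComponentDensity
  positivity

theorem integrable_twoComponentDensity {a b : E3 → ℝ}
    (ha : AEStronglyMeasurable a) (hb : AEStronglyMeasurable b)
    (hag : Integrable (fun x => ‖gradient a x‖ ^ 2))
    (hbg : Integrable (fun x => ‖gradient b x‖ ^ 2))
    (ha2 : Integrable (fun x => a x ^ 2)) (hb2 : Integrable (fun x => b x ^ 2))
    (ha4 : Integrable (fun x => a x ^ 4)) (hb4 : Integrable (fun x => b x ^ 4))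
    (hpot : Integrable (fun x => V x * (a x ^ 2 + b x ^ 2))) :
    Integrable (twoComponentDensity V βn βs q a b) :=
  ((((hag.add hbg).add hpot).add ((integrable_sq_add_sq_sq ha hb ha4 hb4).const_mul βn)).add
    ((integrable_sq_sub_sq_sq ha hb ha4 hb4).const_mul βs)).add ((ha2.add hb2).const_mul q)

theorem twoComponentDensity_sqrt_half_le (hβn : 0 ≤ βn) (hβs : 0 ≤ βs)
    {u1 um1 v1 vm1 : E3 → ℝ} (hu1 : ∀ y, 0 ≤ u1 y) (hum1 : ∀ y, 0 ≤ um1 y)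
    (hv1 : ∀ y, 0 ≤ v1 y) (hvm1 : ∀ y, 0 ≤ vm1 y) {x : E3}
    (hu1x : DifferentiableAt ℝ u1 x) (hum1x : DifferentiableAt ℝ um1 x)
    (hv1x : DifferentiableAt ℝ v1 x) (hvm1x : DifferentiableAt ℝ vm1 x) :
    twoComponentDensity V βn βs q (fun y => √((u1 y ^ 2 + v1 y ^ 2) / 2))
        (fun y => √((um1 y ^ 2 + vm1 y ^ 2) / 2)) x ≤
      (twoComponentDensity V βn βs q u1 um1 x + twoComponentDensity V βn βs q v1 vm1 x) / 2 := by
  have hg1 := norm_gradient_sqrt_half_sq_add_sq_sq_le hu1 hv1 hu1x hv1x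
  have hgm1 := norm_gradient_sqrt_half_sq_add_sq_sq_le hum1 hvm1 hum1x hvm1x
  have hs1 : √((u1 x ^ 2 + v1 x ^ 2) / 2) ^ 2 = (u1 x ^ 2 + v1 x ^ 2) / 2 :=
    Real.sq_sqrt (by positivity)
  have hsm1 : √((um1 x ^ 2 + vm1 x ^ 2) / 2) ^ 2 = (um1 x ^ 2 + vm1 x ^ 2) / 2 :=
    Real.sq_sqrt (by positivity)
  unfold twoComponentDensity
  rw [hs1, hsm1]
  nlinarith [mul_nonneg hβn (sq_nonneg ((u1 x ^ 2 + um1 x ^ 2) - (v1 x ^ 2 + vm1 x ^ 2))),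
    mul_nonneg hβs (sq_nonneg ((u1 x ^ 2 - um1 x ^ 2) - (v1 x ^ 2 - vm1 x ^ 2)))]

end TwoComponentDensity

/-- convexity of the energy on two-component states. -/
theorem two_component_convexity (V : E3 → ℝ) (βn βs q : ℝ)
    (hV : TrapPotential V) (hβn : 0 < βn) (hβs : 0 < βs) (hq : 0 ≤ q)
    (u1 um1 v1 vm1 : E3 → ℝ)
    (hu1 : ContDiff ℝ 1 u1) (hum1 : ContDiff ℝ 1 um1)
    (hv1 : ContDiff ℝ 1 v1) (hvm1 : ContDiff ℝ 1 vm1)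
    (hu1n : ∀ x, 0 ≤ u1 x) (hum1n : ∀ x, 0 ≤ um1 x)
    (hv1n : ∀ x, 0 ≤ v1 x) (hvm1n : ∀ x, 0 ≤ vm1 x)
    (hu1l2 : Integrable (fun x => u1 x ^ 2)) (hum1l2 : Integrable (fun x => um1 x ^ 2))
    (hv1l2 : Integrable (fun x => v1 x ^ 2)) (hvm1l2 : Integrable (fun x => vm1 x ^ 2))
    (hu1g : Integrable (fun x => ‖gradient u1 x‖ ^ 2))
    (hum1g : Integrable (fun x => ‖gradient um1 x‖ ^ 2))
    (hv1g : Integrable (fun x => ‖gradient v1 x‖ ^ 2))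
    (hvm1g : Integrable (fun x => ‖gradient vm1 x‖ ^ 2))
    (hu1l4 : Integrable (fun x => u1 x ^ 4)) (hum1l4 : Integrable (fun x => um1 x ^ 4))
    (hv1l4 : Integrable (fun x => v1 x ^ 4)) (hvm1l4 : Integrable (fun x => vm1 x ^ 4))
    (hupot : Integrable (fun x => V x * (u1 x ^ 2 + um1 x ^ 2)))
    (hvpot : Integrable (fun x => V x * (v1 x ^ 2 + vm1 x ^ 2))) :
    (∀ x : E3, DifferentiableAt ℝ (fun y => Real.sqrt ((u1 y ^ 2 + v1 y ^ 2) / 2)) x) ∧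
    (∀ x : E3, DifferentiableAt ℝ (fun y => Real.sqrt ((um1 y ^ 2 + vm1 y ^ 2) / 2)) x) ∧
    energy V βn βs q (fun y => Real.sqrt ((u1 y ^ 2 + v1 y ^ 2) / 2)) (fun _ => 0)
        (fun y => Real.sqrt ((um1 y ^ 2 + vm1 y ^ 2) / 2))
      ≤ (energy V βn βs q u1 (fun _ => 0) um1 + energy V βn βs q v1 (fun _ => 0) vm1) / 2 := by
  have hd {f : E3 → ℝ} (hf : ContDiff ℝ 1 f) : Differentiable ℝ f :=
    hf.differentiable one_ne_zero
  refine ⟨fun x => .sqrt_half_sq_add_sq hu1n hv1n (hd hu1 x) (hd hv1 x),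
    fun x => .sqrt_half_sq_add_sq hum1n hvm1n (hd hum1 x) (hd hvm1 x), ?_⟩
  have hu := integrable_twoComponentDensity (βn := βn) (βs := βs) (q := q)
    hu1.continuous.aestronglyMeasurable hum1.continuous.aestronglyMeasurable
    hu1g hum1g hu1l2 hum1l2 hu1l4 hum1l4 hupot
  have hv := integrable_twoComponentDensity (βn := βn) (βs := βs) (q := q)
    hv1.continuous.aestronglyMeasurable hvm1.continuous.aestronglyMeasurable
    hv1g hvm1g hv1l2 hvm1l2 hv1l4 hvm1l4 hvpot
  simp only [energy_eq_integral_twoComponentDensity, ← integral_add hu hv, ← integral_div]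
  exact integral_mono_of_nonneg
    (ae_of_all _ (twoComponentDensity_nonneg hV.nonneg hβn.le hβs.le hq _ _))
    ((hu.add hv).div_const 2)
    (ae_of_all _ fun x => twoComponentDensity_sqrt_half_le hβn.le hβs.le hu1n hum1n hv1n hvm1n
      (hd hu1 x) (hd hum1 x) (hd hv1 x) (hd hvm1 x))
end
end

section
/- Fix M ∈ [0,1]. The function q ↦ E_g(M, q) is nondecreasing on [0, ∞) and satisfies the Lipschitz bound |E_g(M, q₁) − E_g(M, q₂)| ≤ |q₁ − q₂| for all q₁, q₂ ≥ 0; moreover, if 0 < M ≤ 1 then it is strictly increasing on [0, ∞). -/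
/-!
For admissible `u`, the parameter `q` enters only through the last term:
`ℰ_{q₂}[u] = ℰ_{q₁}[u] + (q₂ - q₁) ∫ (u₁² + u₋₁²)`, and the constraints `∫ |u|² = 1`,
`∫ (u₁² - u₋₁²) = M` force `M ≤ ∫ (u₁² + u₋₁²) ≤ 1`. Taking infima over `𝔸_M` gives
`E_g(M,q₁) + M (q₂ - q₁) ≤ E_g(M,q₂) ≤ E_g(M,q₁) + (q₂ - q₁)` for `q₁ ≤ q₂`. No `sInf` here
takes a junk value, since the energy is nonnegative and `𝔸_M` is nonempty: it contains
`(√((1+M)/2) φ, 0, √((1-M)/2) φ)` for any nonnegative normalized bump `φ`.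
-/

open MeasureTheory
open scoped RealInnerProductSpace

noncomputable section

/-- The ground-state energy `E_g(M,q) = inf {ℰ_q[u] : u ∈ 𝔸_M}`. -/
def groundEnergy (V : E3 → ℝ) (βn βs q M : ℝ) : ℝ :=
  sInf {E : ℝ | ∃ u1 u0 um1 : E3 → ℝ, Admissible V M u1 u0 um1 ∧
    energy V βn βs q u1 u0 um1 = E}

section CompactSupport

variable {E : Type*} [NormedAddCommGroup E] [MeasurableSpace E] [OpensMeasurableSpace E]
  {μ : Measure E} [IsFiniteMeasureOnCompacts μ]

lemma integrable_pow_of_hasCompactSupport {f : E → ℝ} (hf : Continuous f)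
    (hcs : HasCompactSupport f) {n : ℕ} (hn : n ≠ 0) :
    Integrable (fun x => f x ^ n) μ :=
  (hf.pow n).integrable_of_hasCompactSupport (hcs.comp_left (zero_pow hn))

lemma integrable_norm_gradient_sq_of_hasCompactSupport [InnerProductSpace ℝ E] [CompleteSpace E]
    {f : E → ℝ} (hf : ContDiff ℝ 1 f) (hcs : HasCompactSupport f) :
    Integrable (fun x => ‖gradient f x‖ ^ 2) μ := by
  have hnorm : ∀ x, ‖gradient f x‖ = ‖fderiv ℝ f x‖ := fun x =>
    (InnerProductSpace.toDual ℝ E).symm.norm_map (fderiv ℝ f x)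
  simp only [hnorm]
  exact integrable_pow_of_hasCompactSupport (hf.continuous_fderiv one_ne_zero).norm
    (hcs.fderiv ℝ).norm two_ne_zero

lemma exists_contDiff_hasCompactSupport_integral_sq_eq_one [InnerProductSpace ℝ E]
    [FiniteDimensional ℝ E] [μ.IsOpenPosMeasure] :
    ∃ φ : E → ℝ, ContDiff ℝ 1 φ ∧ HasCompactSupport φ ∧ (∀ x, 0 ≤ φ x) ∧
      ∫ x, φ x ^ 2 ∂μ = 1 := by
  let f : ContDiffBump (0 : E) := ⟨1, 2, one_pos, one_lt_two⟩
  set c := ∫ x, f x ^ 2 ∂μ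
  have hc : 0 < c := (f.continuous.pow 2).integral_pos_of_hasCompactSupport_nonneg_nonzero
    (f.hasCompactSupport.comp_left (zero_pow two_ne_zero)) (fun x => sq_nonneg (f x))
    (x := 0) (by simp [f.one_of_mem_closedBall (Metric.mem_closedBall_self f.rIn_pos.le)])
  refine ⟨fun x => (√c)⁻¹ * f x, contDiff_const.mul f.contDiff,
    f.hasCompactSupport.mul_left, fun x => mul_nonneg (by positivity) f.nonneg, ?_⟩
  simp only [mul_pow, inv_pow, Real.sq_sqrt hc.le, integral_const_mul]
  exact inv_mul_cancel₀ hc.ne'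

end CompactSupport

lemma TrapPotential.locallyIntegrable {V : E3 → ℝ} (hV : TrapPotential V) :
    LocallyIntegrable V := by
  refine locallyIntegrable_iff.2 fun K hK => ?_
  obtain ⟨r, hr⟩ := hK.isBounded.subset_closedBall 0
  obtain ⟨C, hC⟩ := hV.bddOnBalls r
  refine Measure.integrableOn_of_bounded hK.measure_lt_top.ne hV.meas.aestronglyMeasurable
    (M := C) (ae_restrict_of_forall_mem hK.measurableSet fun x hx => ?_)
  rw [Real.norm_of_nonneg (hV.nonneg x)]
  exact hC x (mem_closedBall_zero_iff.1 (hr hx))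

section Energy

variable {V : E3 → ℝ} {βn βs M : ℝ} {u1 u0 um1 : E3 → ℝ}

def energyDensity (V : E3 → ℝ) (βn βs q : ℝ) (u1 u0 um1 : E3 → ℝ) (x : E3) : ℝ :=
  ‖gradient u1 x‖ ^ 2 + ‖gradient u0 x‖ ^ 2 + ‖gradient um1 x‖ ^ 2
    + V x * nsq u1 u0 um1 x
    + βn * (nsq u1 u0 um1 x) ^ 2
    + βs * (2 * u0 x ^ 2 * (u1 x - um1 x) ^ 2 + (u1 x ^ 2 - um1 x ^ 2) ^ 2)
    + q * (u1 x ^ 2 + um1 x ^ 2)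

lemma energy_eq_integral_energyDensity (q : ℝ) :
    energy V βn βs q u1 u0 um1 = ∫ x, energyDensity V βn βs q u1 u0 um1 x :=
  rfl

lemma energyDensity_nonneg (hV : ∀ x, 0 ≤ V x) (hβn : 0 ≤ βn) (hβs : 0 ≤ βs) {q : ℝ}
    (hq : 0 ≤ q) (x : E3) : 0 ≤ energyDensity V βn βs q u1 u0 um1 x := by
  have hnsq : 0 ≤ nsq u1 u0 um1 x := by unfold nsq; positivity
  have hVx := hV x
  unfold energyDensity
  positivity

lemma energyDensity_eq_add (q1 q2 : ℝ) (x : E3) :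
    energyDensity V βn βs q2 u1 u0 um1 x
      = energyDensity V βn βs q1 u1 u0 um1 x + (q2 - q1) * (u1 x ^ 2 + um1 x ^ 2) := by
  unfold energyDensity
  ring

namespace Admissible

lemma integrable_sum_fourth_powers (hu : Admissible V M u1 u0 um1) :
    Integrable fun x => u1 x ^ 4 + u0 x ^ 4 + um1 x ^ 4 :=
  (hu.l4_1.add hu.l4_0).add hu.l4_m1

-- Both quartic terms are bounded by `6 (u₁⁴ + u₀⁴ + u₋₁⁴)`.
lemma integrable_nsq_sq (hu : Admissible V M u1 u0 um1) :
    Integrable fun x => nsq u1 u0 um1 x ^ 2 := by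
  refine (hu.integrable_sum_fourth_powers.const_mul 6).mono' ?_ (.of_forall fun x => ?_)
  · exact ((((hu.smooth1.continuous.pow 2).add (hu.smooth0.continuous.pow 2)).add
      (hu.smoothm1.continuous.pow 2)).pow 2).aestronglyMeasurable
  · rw [Real.norm_of_nonneg (sq_nonneg _)]
    unfold nsq
    nlinarith [sq_nonneg (u1 x ^ 2 - u0 x ^ 2), sq_nonneg (u0 x ^ 2 - um1 x ^ 2),
      sq_nonneg (u1 x ^ 2 - um1 x ^ 2), pow_two_nonneg (u1 x ^ 2), pow_two_nonneg (u0 x ^ 2),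
      pow_two_nonneg (um1 x ^ 2)]

lemma integrable_spinInteraction (hu : Admissible V M u1 u0 um1) :
    Integrable fun x => 2 * u0 x ^ 2 * (u1 x - um1 x) ^ 2 + (u1 x ^ 2 - um1 x ^ 2) ^ 2 := by
  have c1 := hu.smooth1.continuous
  have c0 := hu.smooth0.continuous
  have cm1 := hu.smoothm1.continuous
  refine (hu.integrable_sum_fourth_powers.const_mul 6).mono' ?_ (.of_forall fun x => ?_)
  · exact (((continuous_const.mul (c0.pow 2)).mul ((c1.sub cm1).pow 2)).add
      (((c1.pow 2).sub (cm1.pow 2)).pow 2)).aestronglyMeasurable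
  · rw [Real.norm_of_nonneg (by positivity)]
    nlinarith [sq_nonneg (u1 x * u0 x - u0 x * um1 x), sq_nonneg (u1 x * u0 x + u0 x * um1 x),
      sq_nonneg (u1 x ^ 2 - u0 x ^ 2), sq_nonneg (u0 x ^ 2 - um1 x ^ 2),
      sq_nonneg (u1 x ^ 2 - um1 x ^ 2), sq_nonneg (u1 x ^ 2 + um1 x ^ 2)]

lemma integrable_sq_add_sq (hu : Admissible V M u1 u0 um1) :
    Integrable fun x => u1 x ^ 2 + um1 x ^ 2 :=
  hu.l2_1.add hu.l2_m1

lemma integrable_energyDensity (hu : Admissible V M u1 u0 um1) (βn βs q : ℝ) :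
    Integrable (energyDensity V βn βs q u1 u0 um1) :=
  (((((hu.grad2_1.add hu.grad2_0).add hu.grad2_m1).add hu.pot).add
    (hu.integrable_nsq_sq.const_mul βn)).add (hu.integrable_spinInteraction.const_mul βs)).add
    (hu.integrable_sq_add_sq.const_mul q)

lemma energy_eq_add (hu : Admissible V M u1 u0 um1) (βn βs q1 q2 : ℝ) :
    energy V βn βs q2 u1 u0 um1
      = energy V βn βs q1 u1 u0 um1 + (q2 - q1) * ∫ x, (u1 x ^ 2 + um1 x ^ 2) := by
  simp only [energy_eq_integral_energyDensity, energyDensity_eq_add q1 q2]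
  rw [integral_add (hu.integrable_energyDensity βn βs q1)
    (hu.integrable_sq_add_sq.const_mul _), integral_const_mul]

lemma integral_sq_add_sq_mem_Icc (hu : Admissible V M u1 u0 um1) :
    ∫ x, (u1 x ^ 2 + um1 x ^ 2) ∈ Set.Icc M 1 := by
  have hmass := hu.mass
  have hmag := hu.magnetization
  have h10 : Integrable fun x => u1 x ^ 2 + u0 x ^ 2 := hu.l2_1.add hu.l2_0
  simp only [nsq] at hmass
  rw [integral_add h10 hu.l2_m1, integral_add hu.l2_1 hu.l2_0] at hmass
  rw [integral_sub hu.l2_1 hu.l2_m1] at hmag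
  rw [integral_add hu.l2_1 hu.l2_m1]
  have h0 : 0 ≤ ∫ x, u0 x ^ 2 := integral_nonneg fun x => sq_nonneg _
  have hm1 : 0 ≤ ∫ x, um1 x ^ 2 := integral_nonneg fun x => sq_nonneg _
  constructor <;> linarith

end Admissible

end Energy

lemma admissible_mul_of_hasCompactSupport {V : E3 → ℝ} (hV : TrapPotential V) {φ : E3 → ℝ}
    (hφ : ContDiff ℝ 1 φ) (hcs : HasCompactSupport φ) (hφ0 : ∀ x, 0 ≤ φ x)
    (hφ1 : ∫ x, φ x ^ 2 = 1) {a b : ℝ} (ha : 0 ≤ a) (hb : 0 ≤ b) (hab : a ^ 2 + b ^ 2 = 1) :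
    Admissible V (a ^ 2 - b ^ 2) (fun x => a * φ x) 0 (fun x => b * φ x) := by
  have hnsq : nsq (fun x => a * φ x) 0 (fun x => b * φ x) = fun x => φ x ^ 2 := by
    ext x
    simp only [nsq, Pi.zero_apply]
    linear_combination (φ x ^ 2) * hab
  have hacs : HasCompactSupport fun x => a * φ x := hcs.mul_left
  have hbcs : HasCompactSupport fun x => b * φ x := hcs.mul_left
  have hac : Continuous fun x => a * φ x := continuous_const.mul hφ.continuous
  have hbc : Continuous fun x => b * φ x := continuous_const.mul hφ.continuous
  refine
    { smooth1 := contDiff_const.mul hφ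
      smooth0 := contDiff_const
      smoothm1 := contDiff_const.mul hφ
      nonneg1 := fun x => mul_nonneg ha (hφ0 x)
      nonneg0 := fun _ => le_rfl
      nonnegm1 := fun x => mul_nonneg hb (hφ0 x)
      l2_1 := integrable_pow_of_hasCompactSupport hac hacs two_ne_zero
      l2_0 := by simp
      l2_m1 := integrable_pow_of_hasCompactSupport hbc hbcs two_ne_zero
      grad2_1 := integrable_norm_gradient_sq_of_hasCompactSupport (contDiff_const.mul hφ) hacs
      grad2_0 := by simp [gradient]
      grad2_m1 := integrable_norm_gradient_sq_of_hasCompactSupport (contDiff_const.mul hφ) hbcs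
      l4_1 := integrable_pow_of_hasCompactSupport hac hacs four_ne_zero
      l4_0 := by simp
      l4_m1 := integrable_pow_of_hasCompactSupport hbc hbcs four_ne_zero
      pot := ?_
      mass := by rw [hnsq, hφ1]
      magnetization := ?_ }
  · rw [hnsq]
    exact hV.locallyIntegrable.integrable_smul_right_of_hasCompactSupport
      (hφ.continuous.pow 2) (hcs.comp_left (zero_pow two_ne_zero))
  · simp only [mul_pow, ← sub_mul, integral_const_mul, hφ1, mul_one]

lemma exists_admissible {V : E3 → ℝ} (hV : TrapPotential V) {M : ℝ} (hM0 : 0 ≤ M)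
    (hM1 : M ≤ 1) : ∃ u1 u0 um1 : E3 → ℝ, Admissible V M u1 u0 um1 := by
  obtain ⟨φ, hφ, hcs, hφ0, hφ1⟩ :=
    exists_contDiff_hasCompactSupport_integral_sq_eq_one (μ := (volume : Measure E3))
  have ha : √((1 + M) / 2) ^ 2 = (1 + M) / 2 := Real.sq_sqrt (by linarith)
  have hb : √((1 - M) / 2) ^ 2 = (1 - M) / 2 := Real.sq_sqrt (by linarith)
  have hM : √((1 + M) / 2) ^ 2 - √((1 - M) / 2) ^ 2 = M := by rw [ha, hb]; ring
  exact ⟨_, _, _, hM ▸ admissible_mul_of_hasCompactSupport hV hφ hcs hφ0 hφ1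
    (Real.sqrt_nonneg _) (Real.sqrt_nonneg _) (by rw [ha, hb]; ring)⟩

section GroundEnergy

variable {V : E3 → ℝ} {βn βs M : ℝ}

lemma groundEnergy_le_energy (hV : ∀ x, 0 ≤ V x) (hβn : 0 ≤ βn) (hβs : 0 ≤ βs) {q : ℝ}
    (hq : 0 ≤ q) {u1 u0 um1 : E3 → ℝ} (hu : Admissible V M u1 u0 um1) :
    groundEnergy V βn βs q M ≤ energy V βn βs q u1 u0 um1 := by
  refine csInf_le ⟨0, ?_⟩ ⟨u1, u0, um1, hu, rfl⟩
  rintro _ ⟨v1, v0, vm1, -, rfl⟩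
  exact integral_nonneg (energyDensity_nonneg hV hβn hβs hq)

lemma le_groundEnergy {q c : ℝ} (hne : ∃ u1 u0 um1 : E3 → ℝ, Admissible V M u1 u0 um1)
    (h : ∀ u1 u0 um1 : E3 → ℝ, Admissible V M u1 u0 um1 → c ≤ energy V βn βs q u1 u0 um1) :
    c ≤ groundEnergy V βn βs q M := by
  obtain ⟨u1, u0, um1, hu⟩ := hne
  refine le_csInf ⟨_, u1, u0, um1, hu, rfl⟩ ?_
  rintro _ ⟨v1, v0, vm1, hv, rfl⟩
  exact h v1 v0 vm1 hv

lemma groundEnergy_add_mul_le (hV : TrapPotential V) (hβn : 0 ≤ βn) (hβs : 0 ≤ βs) (hM0 : 0 ≤ M)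
    (hM1 : M ≤ 1) {q1 q2 : ℝ} (hq1 : 0 ≤ q1) (hle : q1 ≤ q2) :
    groundEnergy V βn βs q1 M + M * (q2 - q1) ≤ groundEnergy V βn βs q2 M := by
  refine le_groundEnergy (exists_admissible hV hM0 hM1) fun u1 u0 um1 hu => ?_
  have hmass := hu.integral_sq_add_sq_mem_Icc.1
  rw [hu.energy_eq_add βn βs q1 q2]
  gcongr ?_ + ?_
  · exact groundEnergy_le_energy hV.nonneg hβn hβs hq1 hu
  · rw [mul_comm]
    exact mul_le_mul_of_nonneg_left hmass (sub_nonneg.2 hle)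

lemma groundEnergy_le_add (hV : TrapPotential V) (hβn : 0 ≤ βn) (hβs : 0 ≤ βs) (hM0 : 0 ≤ M)
    (hM1 : M ≤ 1) {q1 q2 : ℝ} (hq1 : 0 ≤ q1) (hle : q1 ≤ q2) :
    groundEnergy V βn βs q2 M ≤ groundEnergy V βn βs q1 M + (q2 - q1) := by
  rw [← sub_le_iff_le_add]
  refine le_groundEnergy (exists_admissible hV hM0 hM1) fun u1 u0 um1 hu => ?_
  have hmass := hu.integral_sq_add_sq_mem_Icc.2
  have hE := groundEnergy_le_energy hV.nonneg hβn hβs (hq1.trans hle) hu (βn := βn) (βs := βs)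
  rw [hu.energy_eq_add βn βs q1 q2] at hE
  linarith [mul_le_mul_of_nonneg_left hmass (sub_nonneg.2 hle)]

end GroundEnergy

/-- in `q`, the ground-state energy is nondecreasing, `1`-Lipschitz,
and strictly increasing when `0 < M ≤ 1`. -/
theorem groundEnergy_monotone_lipschitz_in_q (V : E3 → ℝ) (βn βs M : ℝ)
    (hV : TrapPotential V) (hβn : 0 < βn) (hβs : 0 < βs)
    (hM0 : 0 ≤ M) (hM1 : M ≤ 1) :
    (∀ q1 q2 : ℝ, 0 ≤ q1 → q1 ≤ q2 →
      groundEnergy V βn βs q1 M ≤ groundEnergy V βn βs q2 M) ∧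
    (∀ q1 q2 : ℝ, 0 ≤ q1 → 0 ≤ q2 →
      |groundEnergy V βn βs q1 M - groundEnergy V βn βs q2 M| ≤ |q1 - q2|) ∧
    (0 < M → ∀ q1 q2 : ℝ, 0 ≤ q1 → q1 < q2 →
      groundEnergy V βn βs q1 M < groundEnergy V βn βs q2 M) := by
  have lower := fun q1 q2 (hq1 : 0 ≤ q1) (hle : q1 ≤ q2) =>
    groundEnergy_add_mul_le hV hβn.le hβs.le hM0 hM1 hq1 hle
  have upper := fun q1 q2 (hq1 : 0 ≤ q1) (hle : q1 ≤ q2) =>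
    groundEnergy_le_add hV hβn.le hβs.le hM0 hM1 hq1 hle
  have mono : ∀ q1 q2 : ℝ, 0 ≤ q1 → q1 ≤ q2 →
      groundEnergy V βn βs q1 M ≤ groundEnergy V βn βs q2 M := fun q1 q2 hq1 hle => by
    linarith [lower q1 q2 hq1 hle, mul_nonneg hM0 (sub_nonneg.2 hle)]
  have lipschitz : ∀ q1 q2 : ℝ, 0 ≤ q1 → q1 ≤ q2 →
      |groundEnergy V βn βs q1 M - groundEnergy V βn βs q2 M| ≤ |q1 - q2| := by
    intro q1 q2 hq1 hle
    rw [abs_sub_comm, abs_sub_comm q1, abs_of_nonneg (sub_nonneg.2 (mono q1 q2 hq1 hle)),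
      abs_of_nonneg (sub_nonneg.2 hle)]
    linarith [upper q1 q2 hq1 hle]
  refine ⟨mono, fun q1 q2 hq1 hq2 => ?_, fun hM q1 q2 hq1 hlt => ?_⟩
  · rcases le_total q1 q2 with hle | hle
    · exact lipschitz q1 q2 hq1 hle
    · rw [abs_sub_comm, abs_sub_comm q1]
      exact lipschitz q2 q1 hq2 hle
  · linarith [lower q1 q2 hq1 hlt.le, mul_pos hM (sub_pos.2 hlt)]
end
end

section
/- Let f : ℝ³ → ℝ and g : ℝ³ → ℝ³ be continuous functions such that the pointwise product f·g : ℝ³ → ℝ³ is continuously differentiable. Assume: (i) there exist C > 0 and R > 0 with |f(x)| ≤ C/|x| whenever |x| ≥ R; (ii) x ↦ |g(x)| is in L²(ℝ³); and (iii) the divergence div(f·g) is Lebesgue integrable on ℝ³. Then ∫_{ℝ³} div(f·g) dx = 0. -/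
open MeasureTheory

noncomputable section

/-- The (classical) divergence of a vector field on `ℝ³`, as the trace of its
Fréchet derivative. -/
def divg (F : E3 → E3) (x : E3) : ℝ :=
  LinearMap.trace ℝ E3 (fderiv ℝ F x : E3 →ₗ[ℝ] E3)

/-! On a face of the cube `[-r, r]³` we have `|f| ≤ C / r`, and the face has area `(2r)²`, so by
Cauchy–Schwarz the flux of `f • g` through it is at most `2C` times the square root of the
`L²`-mass of `g` on the plane containing the face. By Tonelli these plane masses are integrable
in `r`, hence tend to zero along some sequence `rₖ → ∞`. Along that sequence the divergence
theorem makes the integral of `div (f • g)` over `[-rₖ, rₖ]³` tend to zero, while integrability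
of the divergence makes it tend to the full integral. -/

open Filter Set Topology
open scoped ENNReal

def cube (n : ℕ) (r : ℝ) : Set (Fin n → ℝ) := Icc (fun _ => -r) (fun _ => r)

lemma volume_cube (n : ℕ) (r : ℝ) :
    volume (cube n r) = ENNReal.ofReal (2 * r) ^ n := by
  rw [cube, Real.volume_Icc_pi]
  simp [two_mul]

lemma aecover_cube (n : ℕ) : AECover (volume : Measure (Fin n → ℝ)) atTop (cube n) where
  ae_eventually_mem := ae_of_all _ fun x => by
    filter_upwards [eventually_ge_atTop ‖x‖] with r hr
    have hx i : |x i| ≤ r := (norm_le_pi_norm x i).trans hr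
    exact ⟨fun i => (abs_le.1 (hx i)).1, fun i => (abs_le.1 (hx i)).2⟩
  measurableSet _ := measurableSet_Icc

lemma tendsto_setIntegral_cube {n : ℕ} {h : (Fin n → ℝ) → ℝ} (hh : Integrable h) :
    Tendsto (fun r => ∫ x in cube n r, h x) atTop (𝓝 (∫ x, h x)) :=
  (aecover_cube n).integral_tendsto_of_countably_generated hh

def divPi {ι : Type*} [Fintype ι] [DecidableEq ι] (G : (ι → ℝ) → ι → ℝ) (x : ι → ℝ) : ℝ :=
  ∑ i, fderiv ℝ G x (Pi.single i 1) i

lemma integral_divPi_cube {n : ℕ} {G : (Fin (n + 1) → ℝ) → Fin (n + 1) → ℝ} (hG : ContDiff ℝ 1 G)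
    (hdiv : Integrable (divPi G)) {r : ℝ} (hr : 0 ≤ r) :
    ∫ x in cube (n + 1) r, divPi G x =
      ∑ i, ((∫ y in cube n r, G (i.insertNth r y) i) -
        ∫ y in cube n r, G (i.insertNth (-r) y) i) :=
  integral_divergence_of_hasFDerivAt_off_countable _ _ (fun _ => by simp; linarith) G
    (fderiv ℝ G) ∅ countable_empty hG.continuous.continuousOn
    (fun x _ => (hG.differentiable one_ne_zero x).hasFDerivAt) hdiv.integrableOn

lemma lintegral_lintegral_insertNth {n : ℕ} (i : Fin (n + 1)) {h : (Fin (n + 1) → ℝ) → ℝ≥0∞}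
    (hh : Measurable h) : ∫⁻ t, ∫⁻ y, h (i.insertNth t y) = ∫⁻ x, h x := by
  have hmp := (volume_preserving_piFinSuccAbove (fun _ : Fin (n + 1) => ℝ) i).symm
  rw [← hmp.lintegral_comp hh]
  exact (lintegral_prod _ (hh.comp hmp.measurable).aemeasurable).symm

lemma exists_seq_tendsto_atTop_tendsto_zero_of_lintegral_ne_top {Φ : ℝ → ℝ≥0∞}
    (hΦ : ∫⁻ t, Φ t ≠ ∞) :
    ∃ r : ℕ → ℝ, Tendsto r atTop atTop ∧ Tendsto (Φ ∘ r) atTop (𝓝 0) := by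
  have frequently_lt : ∀ ε ≠ 0, ∃ᶠ t in atTop, Φ t < ε := by
    intro ε hε
    by_contra! h
    obtain ⟨M, hM⟩ := eventually_atTop.1 h
    refine hΦ (eq_top_iff.2 ?_)
    calc ∞ = ∫⁻ _ in Ici M, ε := by simp [hε]
      _ ≤ ∫⁻ t in Ici M, Φ t := setLIntegral_mono' measurableSet_Ici hM
      _ ≤ ∫⁻ t, Φ t := setLIntegral_le_lintegral _ _
  have : ∀ k : ℕ, ∃ t : ℝ, k ≤ t ∧ Φ t < (k : ℝ≥0∞)⁻¹ := fun k =>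
    ((eventually_ge_atTop (k : ℝ)).and_frequently
      (frequently_lt _ (ENNReal.inv_ne_zero.2 (ENNReal.natCast_ne_top k)))).exists
  choose r hr_ge hr_lt using this
  exact ⟨r, tendsto_atTop_mono hr_ge tendsto_natCast_atTop_atTop,
    tendsto_of_tendsto_of_tendsto_of_le_of_le tendsto_const_nhds ENNReal.tendsto_inv_nat_nhds_zero
      (fun _ => zero_le) fun k => (hr_lt k).le⟩

lemma lintegral_le_sqrt_lintegral_sq_mul_sqrt_measure {α : Type*} [MeasurableSpace α]
    (μ : Measure α) {h : α → ℝ≥0∞} (hh : AEMeasurable h μ) :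
    ∫⁻ x, h x ∂μ ≤ (∫⁻ x, h x ^ 2 ∂μ) ^ (1 / 2 : ℝ) * μ univ ^ (1 / 2 : ℝ) := by
  have := ENNReal.lintegral_mul_le_Lp_mul_Lq μ Real.HolderConjugate.two_two hh aemeasurable_const
    (g := 1)
  simp only [Pi.mul_apply, Pi.one_apply, mul_one, ENNReal.one_rpow, lintegral_const, one_mul]
    at this
  simpa only [← ENNReal.rpow_two] using this

/-- Mathlib's divergence theorem lives on `ι → ℝ`; `toPi F` is `F` read in these coordinates. -/
def toPi {ι : Type*} (F : EuclideanSpace ℝ ι → EuclideanSpace ℝ ι) : (ι → ℝ) → ι → ℝ :=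
  fun y => WithLp.ofLp (F (WithLp.toLp 2 y))

lemma contDiff_toPi {ι : Type*} [Fintype ι] {F : EuclideanSpace ℝ ι → EuclideanSpace ℝ ι}
    {k : WithTop ℕ∞} (hF : ContDiff ℝ k F) : ContDiff ℝ k (toPi F) :=
  ((EuclideanSpace.equiv ι ℝ).contDiff.comp hF).comp (EuclideanSpace.equiv ι ℝ).symm.contDiff

lemma trace_fderiv_eq_divPi {ι : Type*} [Fintype ι] [DecidableEq ι]
    (F : EuclideanSpace ℝ ι → EuclideanSpace ℝ ι) (y : ι → ℝ) :
    LinearMap.trace ℝ _ (fderiv ℝ F (WithLp.toLp 2 y) : EuclideanSpace ℝ ι →ₗ[ℝ] _) =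
      divPi (toPi F) y := by
  set e := EuclideanSpace.equiv ι ℝ
  have hderiv : fderiv ℝ (toPi F) y =
      (e : _ →L[ℝ] _).comp ((fderiv ℝ F (e.symm y)).comp (e.symm : (ι → ℝ) →L[ℝ] _)) := by
    change fderiv ℝ (e ∘ F ∘ e.symm) y = _
    rw [← Function.comp_assoc, e.symm.comp_right_fderiv, e.comp_fderiv]
    rfl
  rw [LinearMap.trace_eq_matrix_trace ℝ (EuclideanSpace.basisFun ι ℝ).toBasis, divPi, hderiv]
  simp [Matrix.trace, LinearMap.toMatrix_apply, e]

section SliceMass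

variable {n : ℕ} {V : Type*} [NormedAddCommGroup V]

def sliceMass (g : EuclideanSpace ℝ (Fin (n + 1)) → V) (i : Fin (n + 1)) (t : ℝ) : ℝ≥0∞ :=
  ∫⁻ y, ‖g (WithLp.toLp 2 (i.insertNth t y))‖ₑ ^ 2

def boundaryMass (g : EuclideanSpace ℝ (Fin (n + 1)) → V) (t : ℝ) : ℝ≥0∞ :=
  ∑ i, (sliceMass g i t + sliceMass g i (-t))

lemma measurable_sliceMass {g : EuclideanSpace ℝ (Fin (n + 1)) → V} (hg : Continuous g)
    (i : Fin (n + 1)) : Measurable (sliceMass g i) :=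
  ((continuous_enorm.comp hg).measurable.pow_const 2).comp
    (PiLp.volume_preserving_toLp _).measurable |>.comp
    (MeasurableEquiv.piFinSuccAbove (fun _ => ℝ) i).symm.measurable |>.lintegral_prod_right'

lemma sliceMass_le_boundaryMass (g : EuclideanSpace ℝ (Fin (n + 1)) → V) (i : Fin (n + 1))
    (t : ℝ) : sliceMass g i t ≤ boundaryMass g t :=
  le_self_add.trans (Finset.single_le_sum (f := fun i => sliceMass g i t + sliceMass g i (-t))
    (fun _ _ => zero_le) (Finset.mem_univ i))

lemma sliceMass_neg_le_boundaryMass (g : EuclideanSpace ℝ (Fin (n + 1)) → V) (i : Fin (n + 1))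
    (t : ℝ) : sliceMass g i (-t) ≤ boundaryMass g t :=
  le_add_self.trans (Finset.single_le_sum (f := fun i => sliceMass g i t + sliceMass g i (-t))
    (fun _ _ => zero_le) (Finset.mem_univ i))

lemma lintegral_sliceMass {g : EuclideanSpace ℝ (Fin (n + 1)) → V} (hg : Continuous g)
    (i : Fin (n + 1)) : ∫⁻ t, sliceMass g i t = ∫⁻ x, ‖g x‖ₑ ^ 2 := by
  have hmp := PiLp.volume_preserving_toLp (Fin (n + 1))
  have hmeas : Measurable fun x => ‖g x‖ₑ ^ 2 := (continuous_enorm.comp hg).measurable.pow_const 2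
  rw [← hmp.lintegral_comp hmeas]
  exact lintegral_lintegral_insertNth i (hmeas.comp hmp.measurable)

lemma lintegral_boundaryMass_ne_top {g : EuclideanSpace ℝ (Fin (n + 1)) → V} (hg : Continuous g)
    (hg2 : ∫⁻ x, ‖g x‖ₑ ^ 2 ≠ ∞) : ∫⁻ t, boundaryMass g t ≠ ∞ := by
  have hmeas := measurable_sliceMass hg
  have hneg i : ∫⁻ t, sliceMass g i (-t) = ∫⁻ t, sliceMass g i t :=
    (Measure.measurePreserving_neg volume).lintegral_comp (hmeas i)
  unfold boundaryMass
  rw [lintegral_finsetSum (f := fun i t => sliceMass g i t + sliceMass g i (-t)) _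
    fun i _ => (hmeas i).add ((hmeas i).comp measurable_neg)]
  refine ENNReal.sum_ne_top.2 fun i _ => ?_
  rw [lintegral_add_left (hmeas i), hneg, lintegral_sliceMass hg]
  exact ENNReal.add_ne_top.2 ⟨hg2, hg2⟩

end SliceMass

lemma enorm_integral_face_le (f : E3 → ℝ) {g : E3 → E3} (hg : Continuous g) {C r t : ℝ}
    (hC : 0 ≤ C) (hr : 0 < r) (ht : |t| = r) (hf : ∀ x : E3, r ≤ ‖x‖ → |f x| ≤ C / ‖x‖)
    (i : Fin 3) :
    ‖∫ y in cube 2 r, toPi (fun x => f x • g x) (i.insertNth t y) i‖ₑ ≤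
      ENNReal.ofReal (2 * C) * sliceMass g i t ^ (1 / 2 : ℝ) := by
  set p : (Fin 2 → ℝ) → E3 := fun y => WithLp.toLp 2 (i.insertNth t y)
  have hp_norm y : r ≤ ‖p y‖ := by
    simpa [p, ht] using PiLp.norm_apply_le (p y) i
  have hf_le y : ‖f (p y)‖ₑ ≤ ENNReal.ofReal (C / r) := by
    rw [Real.enorm_eq_ofReal_abs]
    exact ENNReal.ofReal_le_ofReal ((hf _ (hp_norm y)).trans (by gcongr; exact hp_norm y))
  have hpointwise y :
      ‖toPi (fun x => f x • g x) (i.insertNth t y) i‖ₑ ≤ ENNReal.ofReal (C / r) * ‖g (p y)‖ₑ := by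
    simp only [toPi, WithLp.ofLp_smul, Pi.smul_apply, smul_eq_mul, enorm_mul]
    exact mul_le_mul' (hf_le y) (PiLp.enorm_apply_le _ i)
  have hmeas : AEMeasurable (fun y => ‖g (p y)‖ₑ) (volume.restrict (cube 2 r)) :=
    (continuous_enorm.comp (hg.comp (PiLp.continuous_toLp 2 _ |>.comp
      (Continuous.finInsertNth i continuous_const continuous_id)))).aemeasurable
  calc _ ≤ ∫⁻ y in cube 2 r, ‖toPi (fun x => f x • g x) (i.insertNth t y) i‖ₑ :=
        enorm_integral_le_lintegral_enorm _
    _ ≤ ∫⁻ y in cube 2 r, ENNReal.ofReal (C / r) * ‖g (p y)‖ₑ := lintegral_mono hpointwise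
    _ = ENNReal.ofReal (C / r) * ∫⁻ y in cube 2 r, ‖g (p y)‖ₑ :=
        lintegral_const_mul' _ _ ENNReal.ofReal_ne_top
    _ ≤ ENNReal.ofReal (C / r) * ((∫⁻ y in cube 2 r, ‖g (p y)‖ₑ ^ 2) ^ (1 / 2 : ℝ) *
          volume (cube 2 r) ^ (1 / 2 : ℝ)) := by
        gcongr
        simpa using lintegral_le_sqrt_lintegral_sq_mul_sqrt_measure _ hmeas
    _ ≤ ENNReal.ofReal (C / r) * (sliceMass g i t ^ (1 / 2 : ℝ) * ENNReal.ofReal (2 * r)) := by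
        gcongr
        · exact setLIntegral_le_lintegral _ _
        · rw [volume_cube, ← ENNReal.rpow_natCast, ← ENNReal.rpow_mul]
          norm_num
    _ = ENNReal.ofReal (2 * C) * sliceMass g i t ^ (1 / 2 : ℝ) := by
        have hscale : C / r * (2 * r) = 2 * C := by field_simp
        rw [mul_left_comm, ← ENNReal.ofReal_mul (by positivity), hscale, mul_comm]

lemma divg_toLp (F : E3 → E3) (y : Fin 3 → ℝ) : divg F (WithLp.toLp 2 y) = divPi (toPi F) y :=
  trace_fderiv_eq_divPi F y

lemma integrable_divPi_toPi_iff {F : E3 → E3} :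
    Integrable (divPi (toPi F)) ↔ Integrable (divg F) := by
  rw [← (PiLp.volume_preserving_toLp (Fin 3)).integrable_comp_emb
    (MeasurableEquiv.toLp 2 _).measurableEmbedding]
  exact integrable_congr (ae_of_all _ fun y => (divg_toLp F y).symm)

lemma integral_divg_eq_integral_divPi (F : E3 → E3) :
    ∫ x, divg F x = ∫ y, divPi (toPi F) y := by
  rw [← (PiLp.volume_preserving_toLp (Fin 3)).integral_comp
    (MeasurableEquiv.toLp 2 _).measurableEmbedding]
  exact integral_congr_ae (ae_of_all _ fun y => divg_toLp F y)

lemma enorm_integral_cube_divPi_le (f : E3 → ℝ) {g : E3 → E3} (hg : Continuous g)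
    (hfg : ContDiff ℝ 1 (fun x => f x • g x))
    (hdiv : Integrable (divPi (toPi fun x => f x • g x))) {C r : ℝ} (hC : 0 ≤ C) (hr : 0 < r)
    (hf : ∀ x : E3, r ≤ ‖x‖ → |f x| ≤ C / ‖x‖) :
    ‖∫ x in cube 3 r, divPi (toPi fun x => f x • g x) x‖ₑ ≤
      ENNReal.ofReal (12 * C) * boundaryMass g r ^ (1 / 2 : ℝ) := by
  rw [integral_divPi_cube (contDiff_toPi hfg) hdiv hr.le]
  calc _ ≤ ∑ i : Fin 3, (ENNReal.ofReal (2 * C) * boundaryMass g r ^ (1 / 2 : ℝ) +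
        ENNReal.ofReal (2 * C) * boundaryMass g r ^ (1 / 2 : ℝ)) := by
        refine (enorm_sum_le _ _).trans (Finset.sum_le_sum fun i _ => ?_)
        grw [enorm_sub_le, enorm_integral_face_le f hg hC hr (abs_of_pos hr) hf i,
          enorm_integral_face_le f hg hC hr (by rw [abs_neg, abs_of_pos hr]) hf i,
          sliceMass_le_boundaryMass, sliceMass_neg_le_boundaryMass]
    _ = ENNReal.ofReal (12 * C) * boundaryMass g r ^ (1 / 2 : ℝ) := by
        rw [show (12 : ℝ) * C = 6 * (2 * C) by ring, ENNReal.ofReal_mul (by norm_num)]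
        simp only [Finset.sum_const, Finset.card_univ, Fintype.card_fin, nsmul_eq_mul]
        norm_num
        ring

theorem integral_div_eq_zero_general (f : E3 → ℝ) (g : E3 → E3)
    (hg : Continuous g)
    (hfg : ContDiff ℝ 1 (fun x => f x • g x))
    (hdecay : ∃ C : ℝ, 0 < C ∧ ∃ R : ℝ, 0 < R ∧ ∀ x : E3, R ≤ ‖x‖ → |f x| ≤ C / ‖x‖)
    (hgL2 : Integrable (fun x => ‖g x‖ ^ 2))
    (hdiv : Integrable (fun x => divg (fun y => f y • g y) x)) :
    ∫ x : E3, divg (fun y => f y • g y) x = 0 := by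
  obtain ⟨C, hC, R, hR, hf⟩ := hdecay
  have hdivPi := integrable_divPi_toPi_iff.2 hdiv
  have hg2 : ∫⁻ x, ‖g x‖ₑ ^ 2 ≠ ∞ := by
    simpa only [enorm_pow, enorm_norm] using hgL2.2.ne
  obtain ⟨r, hr_top, hr_mass⟩ :=
    exists_seq_tendsto_atTop_tendsto_zero_of_lintegral_ne_top (lintegral_boundaryMass_ne_top hg hg2)
  rw [integral_divg_eq_integral_divPi]
  refine tendsto_nhds_unique ((tendsto_setIntegral_cube hdivPi).comp hr_top) ?_
  have hbound : Tendsto (fun k => ENNReal.ofReal (12 * C) * boundaryMass g (r k) ^ (1 / 2 : ℝ))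
      atTop (𝓝 0) := by
    have := ENNReal.Tendsto.const_mul (a := ENNReal.ofReal (12 * C))
      ((ENNReal.continuous_rpow_const (y := 1 / 2)).tendsto 0 |>.comp hr_mass)
      (Or.inr ENNReal.ofReal_ne_top)
    rwa [ENNReal.zero_rpow_of_pos (by norm_num), mul_zero] at this
  refine tendsto_zero_iff_enorm_tendsto_zero.2 (tendsto_of_tendsto_of_tendsto_of_le_of_le'
    tendsto_const_nhds hbound (Eventually.of_forall fun _ => zero_le) ?_)
  filter_upwards [hr_top.eventually_ge_atTop R] with k hk
  exact enorm_integral_cube_divPi_le f hg hfg hdivPi hC.le (hR.trans_le hk)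
    fun x hx => hf x (hk.trans hx)

/-- if `f` decays like `1/|x|`, `|g| ∈ L²`, and `div(f·g) ∈ L¹`,
then `∫ div(f·g) = 0`. -/
theorem integral_div_eq_zero (f : E3 → ℝ) (g : E3 → E3)
    (hf : Continuous f) (hg : Continuous g)
    (hfg : ContDiff ℝ 1 (fun x => f x • g x))
    (hdecay : ∃ C : ℝ, 0 < C ∧ ∃ R : ℝ, 0 < R ∧ ∀ x : E3, R ≤ ‖x‖ → |f x| ≤ C / ‖x‖)
    (hgL2 : Integrable (fun x => ‖g x‖ ^ 2))
    (hdiv : Integrable (fun x => divg (fun y => f y • g y) x)) :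
    ∫ x : E3, divg (fun y => f y • g y) x = 0 :=
  integral_div_eq_zero_general f g hg hfg hdecay hgL2 hdiv
end
end
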